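/- arXiv:2501.16168 — 4 statements merged into one kernel-verified Lean document; each statement's English description precedes it below -/
import Mathlib

section
/- For any positive real t, any positive integer n, positive reals τ_1 ≤ τ_2 ≤ ... ≤ τ_n, and any index j* in {1,...,n}, if t = 2 (∑_{i=1}^{j*} 1/τ_i)^{-1} (R + j*) for a positive integer R, then ∑_{i=1}^{n} max(⌊t/τ_i⌋ - 1, 0) ≥ R. -/
/-! Only the terms with `i ≤ j*` are needed. Each of them exceeds `t / τ i - 2` because
`⌊x⌋ > x - 1`, and the choice of `t` makes `∑_{i ≤ j*} t / τ i = 2 (R + j*)`, so these terms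
sum to at least `2 (R + j*) - 2 j* = 2 R ≥ R`. -/

open Finset

theorem sub_two_le_max_floor_sub_one (x : ℝ) : x - 2 ≤ ((max (⌊x⌋ - 1) 0 : ℤ) : ℝ) := by
  push_cast
  linarith [Int.sub_one_lt_floor x, le_max_left ((⌊x⌋ : ℝ) - 1) 0]

theorem sum_sub_two_mul_card_le_sum_max_floor_sub_one {ι : Type*} (s : Finset ι) (f : ι → ℝ) :
    ∑ i ∈ s, f i - 2 * #s ≤ ((∑ i ∈ s, max (⌊f i⌋ - 1) 0 : ℤ) : ℝ) := by
  push_cast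
  calc ∑ i ∈ s, f i - 2 * #s = ∑ i ∈ s, (f i - 2) := by
        rw [sum_sub_distrib, sum_const, nsmul_eq_mul, mul_comm]
    _ ≤ _ := sum_le_sum fun i _ => by exact_mod_cast sub_two_le_max_floor_sub_one (f i)

theorem stmt_0_general (n : ℕ) (τ : ℕ → ℝ)
    (hτpos : ∀ i ∈ Finset.Icc 1 n, 0 < τ i)
    (R : ℕ)
    (jstar : ℕ) (hj : jstar ∈ Finset.Icc 1 n)
    (t : ℝ)
    (hteq : t = 2 * (∑ i ∈ Finset.Icc 1 jstar, (τ i)⁻¹)⁻¹ * ((R : ℝ) + (jstar : ℝ))) :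
    (R : ℤ) ≤ ∑ i ∈ Finset.Icc 1 n, max (⌊t / τ i⌋ - 1) 0 := by
  obtain ⟨hj₁, hjn⟩ := mem_Icc.mp hj
  have hsub : Icc 1 jstar ⊆ Icc 1 n := Icc_subset_Icc_right hjn
  have hS : 0 < ∑ i ∈ Icc 1 jstar, (τ i)⁻¹ :=
    sum_pos (fun i hi => inv_pos.mpr (hτpos i (hsub hi))) (nonempty_Icc.mpr hj₁)
  have hsum : ∑ i ∈ Icc 1 jstar, t / τ i = 2 * (R + jstar) := by
    simp_rw [div_eq_mul_inv, ← mul_sum, hteq]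
    generalize ∑ i ∈ Icc 1 jstar, (τ i)⁻¹ = S at hS ⊢
    field_simp
  have hfirst : (R : ℤ) ≤ ∑ i ∈ Icc 1 jstar, max (⌊t / τ i⌋ - 1) 0 := by
    have h := sum_sub_two_mul_card_le_sum_max_floor_sub_one (Icc 1 jstar) (fun i => t / τ i)
    rw [hsum, Nat.card_Icc, Nat.add_sub_cancel] at h
    exact Int.cast_le.mp (h.trans' (by push_cast; linarith [(R.cast_nonneg : (0 : ℝ) ≤ R)]))
  exact hfirst.trans (sum_le_sum_of_subset_of_nonneg hsub fun _ _ _ => le_max_right _ _)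

theorem stmt_0 (n : ℕ) (hn : 1 ≤ n) (τ : ℕ → ℝ)
    (hτpos : ∀ i ∈ Finset.Icc 1 n, 0 < τ i)
    (hτmono : ∀ i ∈ Finset.Icc 1 n, ∀ j ∈ Finset.Icc 1 n, i ≤ j → τ i ≤ τ j)
    (R : ℕ) (hR : 1 ≤ R)
    (jstar : ℕ) (hj : jstar ∈ Finset.Icc 1 n)
    (t : ℝ) (ht : 0 < t)
    (hteq : t = 2 * (∑ i ∈ Finset.Icc 1 jstar, (τ i)⁻¹)⁻¹ * ((R : ℝ) + (jstar : ℝ))) :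
    (R : ℤ) ≤ ∑ i ∈ Finset.Icc 1 n, max (⌊t / τ i⌋ - 1) 0 :=
  stmt_0_general n τ hτpos R jstar hj t hteq
end

section
/- Let τ_1,...,τ_n be positive reals with 0 < τ_1 ≤ ... ≤ τ_n, and define t(R) = 2 min_{m∈[n]} [(1/m ∑_{i=1}^m 1/τ_i)^{-1}(1 + R/m)] for positive integer R. Then for every m ∈ [n], all workers i ∈ [m] jointly compute at least R gradients within time t(R) after accounting for one wasted gradient each; formally, ∑_{i=1}^{n} max(⌊t(R)/τ_i⌋ - 1, 0) ≥ R. -/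
open Finset

/-- Each worker loses at most one gradient to rounding down and one to the discarded one. -/
theorem mul_sum_inv_sub_two_mul_card_le_sum_max_floor {ι : Type*} {s t : Finset ι}
    (hst : s ⊆ t) (τ : ι → ℝ) (T : ℝ) :
    T * ∑ i ∈ s, (τ i)⁻¹ - 2 * #s ≤ ((∑ i ∈ t, max (⌊T / τ i⌋ - 1) 0 : ℤ) : ℝ) := by
  calc T * ∑ i ∈ s, (τ i)⁻¹ - 2 * #s = ∑ i ∈ s, (T / τ i - 2) := by
        simp only [sum_sub_distrib, mul_sum, sum_const, nsmul_eq_mul, div_eq_mul_inv]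
        ring
    _ ≤ ∑ i ∈ s, ((max (⌊T / τ i⌋ - 1) 0 : ℤ) : ℝ) :=
        sum_le_sum fun i _ => sub_two_le_max_floor_sub_one _
    _ ≤ ∑ i ∈ t, ((max (⌊T / τ i⌋ - 1) 0 : ℤ) : ℝ) :=
        sum_le_sum_of_subset_of_nonneg hst fun i _ _ => by exact_mod_cast le_max_right _ 0
    _ = ((∑ i ∈ t, max (⌊T / τ i⌋ - 1) 0 : ℤ) : ℝ) := by push_cast; rfl

theorem inv_one_div_mul_mul_one_add_div_mul {K : Type*} [Field K] {m S : K} (R : K)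
    (hm : m ≠ 0) (hS : S ≠ 0) : ((1 / m) * S)⁻¹ * (1 + R / m) * S = m + R := by
  field_simp

theorem stmt_8_general (n : ℕ) (hn : 1 ≤ n) (τ : ℕ → ℝ)
    (hτpos : ∀ i ∈ Finset.Icc 1 n, 0 < τ i)
    (R : ℕ) :
    (R : ℤ) ≤ ∑ i ∈ Finset.Icc 1 n,
      max (⌊(2 * (Finset.Icc 1 n).inf' (Finset.nonempty_Icc.mpr hn)
            (fun m => ((1 / (m : ℝ)) * ∑ i ∈ Finset.Icc 1 m, (τ i)⁻¹)⁻¹ * (1 + (R : ℝ) / m)))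
          / τ i⌋ - 1) 0 := by
  obtain ⟨m, hm, hmin⟩ := exists_mem_eq_inf' (nonempty_Icc.mpr hn)
    fun m => ((1 / (m : ℝ)) * ∑ i ∈ Icc 1 m, (τ i)⁻¹)⁻¹ * (1 + (R : ℝ) / m)
  rw [mem_Icc] at hm
  have hsub : Icc 1 m ⊆ Icc 1 n := Icc_subset_Icc_right hm.2
  have hS : 0 < ∑ i ∈ Icc 1 m, (τ i)⁻¹ :=
    sum_pos (fun i hi => inv_pos.mpr (hτpos i (hsub hi))) (nonempty_Icc.mpr hm.1)
  have hm0 : (m : ℝ) ≠ 0 := by exact_mod_cast (Nat.one_le_iff_ne_zero.mp hm.1)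
  set T := 2 * (Icc 1 n).inf' (nonempty_Icc.mpr hn)
    fun m => ((1 / (m : ℝ)) * ∑ i ∈ Icc 1 m, (τ i)⁻¹)⁻¹ * (1 + (R : ℝ) / m) with hTdef
  -- at a minimiser `m`, the time `T` is exactly what the first `m` workers need for `2 (m + R)`
  have hT : T * ∑ i ∈ Icc 1 m, (τ i)⁻¹ = 2 * (m + R) := by
    rw [hTdef, hmin, mul_assoc, inv_one_div_mul_mul_one_add_div_mul _ hm0 hS.ne']
  have hbound := mul_sum_inv_sub_two_mul_card_le_sum_max_floor hsub τ T
  rw [hT, Nat.card_Icc, Nat.add_sub_cancel] at hbound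
  have hR : (R : ℝ) ≤ 2 * (m + R) - 2 * m := by linarith [R.cast_nonneg (α := ℝ)]
  exact_mod_cast hR.trans hbound

theorem stmt_8 (n : ℕ) (hn : 1 ≤ n) (τ : ℕ → ℝ)
    (hτpos : ∀ i ∈ Finset.Icc 1 n, 0 < τ i)
    (hτmono : ∀ i ∈ Finset.Icc 1 n, ∀ j ∈ Finset.Icc 1 n, i ≤ j → τ i ≤ τ j)
    (R : ℕ) (hR : 1 ≤ R) :
    (R : ℤ) ≤ ∑ i ∈ Finset.Icc 1 n,
      max (⌊(2 * (Finset.Icc 1 n).inf' (Finset.nonempty_Icc.mpr hn)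
            (fun m => ((1 / (m : ℝ)) * ∑ i ∈ Finset.Icc 1 m, (τ i)⁻¹)⁻¹ * (1 + (R : ℝ) / m)))
          / τ i⌋ - 1) 0 :=
  stmt_8_general n hn τ hτpos R
end

section
/- Let f : ℝ^d → ℝ have L-Lipschitz gradient, let x, y ∈ ℝ^d, and let γ > 0 with γL ≤ 1/2. If g is a random vector with E[g] = ∇f(y) and E[‖g - ∇f(y)‖²] ≤ σ², then E[f(x - γ g)] ≤ f(x) - (γ/2)‖∇f(x)‖² - (γ/4)‖∇f(y)‖² + (γL²/2)‖x - y‖² + (γ²L/2)σ². -/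
open RealInnerProductSpace



open MeasureTheory RealInnerProductSpace in
lemma descent_aux {E : Type*} [NormedAddCommGroup E] [InnerProductSpace ℝ E] [CompleteSpace E]
    (f : E → ℝ) (L : ℝ) (hL : 0 ≤ L) (hdiff : Differentiable ℝ f)
    (hlip : ∀ u v, ‖gradient f u - gradient f v‖ ≤ L * ‖u - v‖) (x h : E) :
    f (x + h) ≤ f x + ⟪gradient f x, h⟫ + L / 2 * ‖h‖ ^ 2 := by
  set φ' : ℝ → ℝ := fun t => ⟪gradient f (x + t • h), h⟫ with hφ'
  have hgradcont : Continuous (fun u => gradient f u) := by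
    rcases eq_or_lt_of_le hL with hL0 | hL0
    · have hconst : ∀ u : E, gradient f u = gradient f x := by
        intro u
        have h0 := hlip u x
        rw [← hL0, zero_mul] at h0
        have h1 := le_antisymm h0 (norm_nonneg _)
        rwa [norm_eq_zero, sub_eq_zero] at h1
      exact continuous_const.congr fun u => (hconst u).symm
    · exact (LipschitzWith.of_dist_le_mul (K := ⟨L, hL⟩) (fun u v => by
        rw [dist_eq_norm, dist_eq_norm]; exact hlip u v)).continuous
  have hderiv : ∀ t : ℝ, HasDerivAt (fun t : ℝ => f (x + t • h)) (φ' t) t := by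
    intro t
    have h1 : HasFDerivAt f (InnerProductSpace.toDual ℝ E (gradient f (x + t • h))) (x + t • h) :=
      (hdiff _).hasGradientAt.hasFDerivAt
    have h2 : HasDerivAt (fun t : ℝ => x + t • h) h t := by
      simpa using ((hasDerivAt_id t).smul_const h).const_add x
    exact h1.comp_hasDerivAt t h2
  have hcont : Continuous φ' :=
    ((hgradcont.comp (by continuity)).inner continuous_const)
  have hFTC : f (x + h) - f x = ∫ t in (0:ℝ)..1, φ' t := by
    have := intervalIntegral.integral_eq_sub_of_hasDerivAt
      (f := fun t : ℝ => f (x + t • h)) (a := 0) (b := 1)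
      (fun t _ => hderiv t) (hcont.intervalIntegrable 0 1)
    simpa using this.symm
  have hbound : ∫ t in (0:ℝ)..1, φ' t
      ≤ ∫ t in (0:ℝ)..1, (⟪gradient f x, h⟫ + L * t * ‖h‖ ^ 2) := by
    apply intervalIntegral.integral_mono_on (by norm_num)
      (hcont.intervalIntegrable 0 1)
      ((by continuity : Continuous fun t : ℝ => (⟪gradient f x, h⟫ + L * t * ‖h‖ ^ 2)).intervalIntegrable 0 1)
    intro t ht
    rw [Set.mem_Icc] at ht
    have key : φ' t - ⟪gradient f x, h⟫ ≤ L * t * ‖h‖ ^ 2 := by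
      have : φ' t - ⟪gradient f x, h⟫ = ⟪gradient f (x + t • h) - gradient f x, h⟫ := by
        rw [inner_sub_left]
      rw [this]
      calc ⟪gradient f (x + t • h) - gradient f x, h⟫
          ≤ ‖gradient f (x + t • h) - gradient f x‖ * ‖h‖ := real_inner_le_norm _ _
        _ ≤ (L * ‖(x + t • h) - x‖) * ‖h‖ := by
            exact mul_le_mul_of_nonneg_right (hlip _ _) (norm_nonneg _)
        _ = L * t * ‖h‖ ^ 2 := by
            rw [add_sub_cancel_left, norm_smul, Real.norm_eq_abs, abs_of_nonneg ht.1]; ring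
    linarith
  have hint : ∫ t in (0:ℝ)..1, (⟪gradient f x, h⟫ + L * t * ‖h‖ ^ 2)
      = ⟪gradient f x, h⟫ + L / 2 * ‖h‖ ^ 2 := by
    rw [intervalIntegral.integral_add (intervalIntegrable_const)
      (by apply Continuous.intervalIntegrable; continuity)]
    have h1 : ∫ t in (0:ℝ)..1, (⟪gradient f x, h⟫ : ℝ) = ⟪gradient f x, h⟫ := by simp
    have h2 : ∫ t in (0:ℝ)..1, L * t * ‖h‖ ^ 2 = L / 2 * ‖h‖ ^ 2 := by
      have he : (fun t : ℝ => L * t * ‖h‖ ^ 2) = fun t : ℝ => (L * ‖h‖^2) * t := by ext t; ring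
      rw [he, intervalIntegral.integral_const_mul, integral_id]; ring
    rw [h1, h2]
  linarith [hFTC, hbound, hint]

open MeasureTheory in
theorem stmt_10 {d : ℕ} (f : EuclideanSpace ℝ (Fin d) → ℝ) (L γ σ : ℝ)
    (hL : 0 < L) (hdiff : Differentiable ℝ f)
    (hlip : ∀ u v, ‖gradient f u - gradient f v‖ ≤ L * ‖u - v‖)
    (hγ : 0 < γ) (hγL : γ * L ≤ 1 / 2)
    {Ω : Type*} [MeasurableSpace Ω] (μ : Measure Ω) [IsProbabilityMeasure μ]
    (g : Ω → EuclideanSpace ℝ (Fin d))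
    (x y : EuclideanSpace ℝ (Fin d))
    (hgint : Integrable g μ)
    (hmean : ∫ ω, g ω ∂μ = gradient f y)
    (hvarint : Integrable (fun ω => ‖g ω - gradient f y‖ ^ 2) μ)
    (hvar : ∫ ω, ‖g ω - gradient f y‖ ^ 2 ∂μ ≤ σ ^ 2)
    (hfint : Integrable (fun ω => f (x - γ • g ω)) μ) :
    ∫ ω, f (x - γ • g ω) ∂μ
      ≤ f x - (γ / 2) * ‖gradient f x‖ ^ 2 - (γ / 4) * ‖gradient f y‖ ^ 2
        + (γ * L ^ 2 / 2) * ‖x - y‖ ^ 2 + (γ ^ 2 * L / 2) * σ ^ 2 := by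
  set a := gradient f x with ha
  set b := gradient f y with hb
  -- pointwise descent bound
  have hpt : ∀ ω, f (x - γ • g ω)
      ≤ f x - γ * ⟪a, g ω⟫ + (L * γ ^ 2 / 2) * ‖g ω‖ ^ 2 := by
    intro ω
    have := descent_aux f L hL.le hdiff hlip x (-(γ • g ω))
    rw [← sub_eq_add_neg] at this
    have e1 : ⟪a, -(γ • g ω)⟫ = -(γ * ⟪a, g ω⟫) := by
      rw [inner_neg_right, real_inner_smul_right]
    have e2 : ‖-(γ • g ω)‖ ^ 2 = γ ^ 2 * ‖g ω‖ ^ 2 := by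
      rw [norm_neg, norm_smul, Real.norm_eq_abs, abs_of_pos hγ, mul_pow]
    rw [e1, e2] at this
    linarith
  -- integrability of the majorant
  have hsub : Integrable (fun ω => g ω - b) μ := hgint.sub (integrable_const b)
  have hinner_int : Integrable (fun ω => ⟪a, g ω⟫) μ := hgint.const_inner a
  have hcross_int : Integrable (fun ω => ⟪b, g ω - b⟫) μ := hsub.const_inner b
  have hnormsq_eq : (fun ω => ‖g ω‖ ^ 2)
      = fun ω => ‖g ω - b‖ ^ 2 + 2 * ⟪b, g ω - b⟫ + ‖b‖ ^ 2 := by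
    funext ω
    have : g ω = (g ω - b) + b := by abel
    rw [this, norm_add_sq_real]
    rw [real_inner_comm]
    ring_nf
    abel_nf
  have hint1 : Integrable (fun ω => ‖g ω - b‖ ^ 2 + 2 * ⟪b, g ω - b⟫) μ :=
    hvarint.add (hcross_int.const_mul 2)
  have hint2 : Integrable (fun ω => ‖g ω - b‖ ^ 2 + 2 * ⟪b, g ω - b⟫ + ‖b‖ ^ 2) μ :=
    hint1.add (integrable_const _)
  have hnormsq_int : Integrable (fun ω => ‖g ω‖ ^ 2) μ := by
    rw [hnormsq_eq]; exact hint2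
  have hint3 : Integrable (fun ω => f x - γ * ⟪a, g ω⟫) μ :=
    (integrable_const (f x)).sub (hinner_int.const_mul γ)
  have hRHS_int : Integrable
      (fun ω => f x - γ * ⟪a, g ω⟫ + (L * γ ^ 2 / 2) * ‖g ω‖ ^ 2) μ :=
    hint3.add (hnormsq_int.const_mul _)
  have hmono : ∫ ω, f (x - γ • g ω) ∂μ
      ≤ ∫ ω, (f x - γ * ⟪a, g ω⟫ + (L * γ ^ 2 / 2) * ‖g ω‖ ^ 2) ∂μ :=
    integral_mono hfint hRHS_int hpt
  -- compute the integral of the majorant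
  have hsub_zero : ∫ ω, (g ω - b) ∂μ = 0 := by
    rw [integral_sub hgint (integrable_const b), hmean, integral_const]
    simp
  have hcross_zero : ∫ ω, ⟪b, g ω - b⟫ ∂μ = 0 := by
    rw [integral_inner hsub b, hsub_zero, inner_zero_right]
  have hinner_val : ∫ ω, ⟪a, g ω⟫ ∂μ = ⟪a, b⟫ := by
    rw [integral_inner hgint a, hmean]
  set V := ∫ ω, ‖g ω - b‖ ^ 2 ∂μ with hV
  clear_value V
  have hVnonneg : 0 ≤ V := by
    rw [hV]; exact integral_nonneg fun ω => by positivity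
  have hnormsq_val : ∫ ω, ‖g ω‖ ^ 2 ∂μ = V + ‖b‖ ^ 2 := by
    rw [hnormsq_eq, integral_add hint1 (integrable_const _),
      integral_add hvarint (hcross_int.const_mul 2), integral_const_mul, hcross_zero,
      integral_const]
    simp [hV]
  have hRHS_val : ∫ ω, (f x - γ * ⟪a, g ω⟫ + (L * γ ^ 2 / 2) * ‖g ω‖ ^ 2) ∂μ
      = f x - γ * ⟪a, b⟫ + (L * γ ^ 2 / 2) * (V + ‖b‖ ^ 2) := by
    rw [integral_add hint3 (hnormsq_int.const_mul _),
      integral_sub (integrable_const (f x)) (hinner_int.const_mul γ),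
      integral_const_mul, integral_const_mul, hinner_val, hnormsq_val, integral_const]
    simp
  -- final arithmetic
  have hsq : ‖a - b‖ ^ 2 ≤ L ^ 2 * ‖x - y‖ ^ 2 := by
    have h0 := pow_le_pow_left₀ (norm_nonneg (a - b)) (hlip x y) 2
    rwa [mul_pow] at h0
  have hexp : ‖a - b‖ ^ 2 = ‖a‖ ^ 2 - 2 * ⟪a, b⟫ + ‖b‖ ^ 2 := norm_sub_sq_real a b
  have h2 : γ ^ 2 * L ≤ γ / 2 := by
    have hm := mul_le_mul_of_nonneg_left hγL hγ.le
    have he : γ * (γ * L) = γ ^ 2 * L := by ring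
    linarith
  have hterm : (L * γ ^ 2 / 2) * ‖b‖ ^ 2 ≤ (γ / 4) * ‖b‖ ^ 2 := by
    have hm := mul_le_mul_of_nonneg_right h2 (sq_nonneg ‖b‖)
    have he1 : γ ^ 2 * L * ‖b‖ ^ 2 = 2 * ((L * γ ^ 2 / 2) * ‖b‖ ^ 2) := by ring
    have he2 : γ / 2 * ‖b‖ ^ 2 = 2 * ((γ / 4) * ‖b‖ ^ 2) := by ring
    linarith
  have hvarterm : (L * γ ^ 2 / 2) * V ≤ (γ ^ 2 * L / 2) * σ ^ 2 := by
    have h3 := mul_le_mul_of_nonneg_left hvar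
      (by positivity : (0:ℝ) ≤ L * γ ^ 2 / 2)
    have he : L * γ ^ 2 / 2 * σ ^ 2 = (γ ^ 2 * L / 2) * σ ^ 2 := by ring
    linarith
  have hkey : (γ / 2) * ‖a‖ ^ 2 - γ * ⟪a, b⟫ + (γ / 2) * ‖b‖ ^ 2
      ≤ (γ * L ^ 2 / 2) * ‖x - y‖ ^ 2 := by
    have h1 : ‖a‖ ^ 2 - 2 * ⟪a, b⟫ + ‖b‖ ^ 2 ≤ L ^ 2 * ‖x - y‖ ^ 2 := by
      rw [← hexp]; exact hsq
    have hm := mul_le_mul_of_nonneg_left h1 (by positivity : (0:ℝ) ≤ γ / 2)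
    have he1 : γ / 2 * (‖a‖ ^ 2 - 2 * ⟪a, b⟫ + ‖b‖ ^ 2)
        = (γ / 2) * ‖a‖ ^ 2 - γ * ⟪a, b⟫ + (γ / 2) * ‖b‖ ^ 2 := by ring
    have he2 : γ / 2 * (L ^ 2 * ‖x - y‖ ^ 2) = (γ * L ^ 2 / 2) * ‖x - y‖ ^ 2 := by ring
    linarith
  calc ∫ ω, f (x - γ • g ω) ∂μ
      ≤ f x - γ * ⟪a, b⟫ + (L * γ ^ 2 / 2) * (V + ‖b‖ ^ 2) := by rw [← hRHS_val]; exact hmono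
    _ ≤ f x - (γ / 2) * ‖a‖ ^ 2 - (γ / 4) * ‖b‖ ^ 2
        + (γ * L ^ 2 / 2) * ‖x - y‖ ^ 2 + (γ ^ 2 * L / 2) * σ ^ 2 := by
        have hexpand : (L * γ ^ 2 / 2) * (V + ‖b‖ ^ 2)
            = (L * γ ^ 2 / 2) * V + (L * γ ^ 2 / 2) * ‖b‖ ^ 2 := by ring
        linarith [hterm, hvarterm, hkey, hexpand]
end

section
/- Let τ_1 ≤ ... ≤ τ_n be positive reals and R a positive integer. Define s* = min{s ≥ 0 : ∑_{i=1}^n ⌊s/τ_i⌋ ≥ R} and t(R) = 2 min_{m∈[n]} [(∑_{i=1}^m 1/τ_i)^{-1}(R + m)]. Then s* ≤ t(R). -/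
/-!
Let `m` attain the minimum and `S = ∑_{i ≤ m} 1/τ_i`. At time `t = 2(R + m)/S` the first `m`
workers alone have finished `∑_{i ≤ m} ⌊t/τ_i⌋ ≥ t S - m = 2R + m ≥ R` gradients, since
`⌊x⌋ > x - 1`; the other workers only add nonnegative counts, so `t` is an admissible time.
-/

open Finset

theorem sum_sub_card_le_sum_floor {ι : Type*} (s : Finset ι) (x : ι → ℝ) :
    ∑ i ∈ s, x i - #s ≤ ∑ i ∈ s, (⌊x i⌋ : ℝ) := by
  rw [← nsmul_one, ← Finset.sum_const, ← Finset.sum_sub_distrib]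
  exact Finset.sum_le_sum fun i _ => (Int.sub_one_lt_floor _).le

theorem mul_sum_inv_sub_card_le_sum_floor_div {ι : Type*} (s : Finset ι) (τ : ι → ℝ)
    (t : ℝ) :
    t * ∑ i ∈ s, (τ i)⁻¹ - #s ≤ ((∑ i ∈ s, ⌊t / τ i⌋ : ℤ) : ℝ) := by
  push_cast
  simpa only [Finset.mul_sum, div_eq_mul_inv] using
    sum_sub_card_le_sum_floor s (fun i => t / τ i)

theorem sum_floor_div_le_of_subset {ι : Type*} {s u : Finset ι} (hsu : s ⊆ u) (τ : ι → ℝ)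
    (hτ : ∀ i ∈ u, 0 ≤ τ i) {t : ℝ} (ht : 0 ≤ t) :
    ∑ i ∈ s, ⌊t / τ i⌋ ≤ ∑ i ∈ u, ⌊t / τ i⌋ :=
  Finset.sum_le_sum_of_subset_of_nonneg hsu fun i hi _ =>
    Int.floor_nonneg.mpr (div_nonneg ht (hτ i hi))

theorem le_sum_floor_two_mul_inv_sum_inv {ι : Type*} (s : Finset ι) (τ : ι → ℝ)
    (hS : 0 < ∑ i ∈ s, (τ i)⁻¹) (R : ℕ) :
    (R : ℤ) ≤ ∑ i ∈ s, ⌊2 * ((∑ j ∈ s, (τ j)⁻¹)⁻¹ * ((R : ℝ) + #s)) / τ i⌋ := by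
  set t := 2 * ((∑ j ∈ s, (τ j)⁻¹)⁻¹ * ((R : ℝ) + #s))
  have htS : t * ∑ j ∈ s, (τ j)⁻¹ = 2 * ((R : ℝ) + #s) := by
    rw [mul_assoc, mul_right_comm, inv_mul_cancel₀ hS.ne', one_mul]
  have hcount := mul_sum_inv_sub_card_le_sum_floor_div s τ t
  rw [htS] at hcount
  have hR : (R : ℝ) ≤ ((∑ i ∈ s, ⌊t / τ i⌋ : ℤ) : ℝ) := by linarith
  exact_mod_cast hR

theorem stmt_17_general (n : ℕ) (hn : 1 ≤ n) (τ : ℕ → ℝ)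
    (hτpos : ∀ i ∈ Finset.Icc 1 n, 0 < τ i)
    (R : ℕ) :
    sInf {s : ℝ | 0 ≤ s ∧ (R : ℤ) ≤ ∑ i ∈ Finset.Icc 1 n, ⌊s / τ i⌋}
      ≤ 2 * (Finset.Icc 1 n).inf' (Finset.nonempty_Icc.mpr hn)
          (fun m => (∑ i ∈ Finset.Icc 1 m, (τ i)⁻¹)⁻¹ * ((R : ℝ) + m)) := by
  obtain ⟨m, hm, hfm⟩ := Finset.exists_mem_eq_inf' (Finset.nonempty_Icc.mpr hn)
    (fun m => (∑ i ∈ Finset.Icc 1 m, (τ i)⁻¹)⁻¹ * ((R : ℝ) + m))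
  obtain ⟨hm1, hmn⟩ := Finset.mem_Icc.mp hm
  have hsub : Icc 1 m ⊆ Icc 1 n := Finset.Icc_subset_Icc_right hmn
  have hS : 0 < ∑ i ∈ Icc 1 m, (τ i)⁻¹ :=
    Finset.sum_pos (fun i hi => inv_pos.mpr (hτpos i (hsub hi)))
      (Finset.nonempty_Icc.mpr hm1)
  have ht : 0 ≤ 2 * ((∑ i ∈ Icc 1 m, (τ i)⁻¹)⁻¹ * ((R : ℝ) + m)) := by positivity
  have hcount := le_sum_floor_two_mul_inv_sum_inv (Icc 1 m) τ hS R
  rw [Nat.card_Icc, Nat.add_sub_cancel] at hcount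
  rw [hfm]
  exact csInf_le ⟨0, fun _ hs => hs.1⟩
    ⟨ht, hcount.trans (sum_floor_div_le_of_subset hsub τ (fun i hi => (hτpos i hi).le) ht)⟩

theorem stmt_17 (n : ℕ) (hn : 1 ≤ n) (τ : ℕ → ℝ)
    (hτpos : ∀ i ∈ Finset.Icc 1 n, 0 < τ i)
    (hτmono : ∀ i ∈ Finset.Icc 1 n, ∀ j ∈ Finset.Icc 1 n, i ≤ j → τ i ≤ τ j)
    (R : ℕ) (hR : 1 ≤ R) :
    sInf {s : ℝ | 0 ≤ s ∧ (R : ℤ) ≤ ∑ i ∈ Finset.Icc 1 n, ⌊s / τ i⌋}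
      ≤ 2 * (Finset.Icc 1 n).inf' (Finset.nonempty_Icc.mpr hn)
          (fun m => (∑ i ∈ Finset.Icc 1 m, (τ i)⁻¹)⁻¹ * ((R : ℝ) + m)) :=
  stmt_17_general n hn τ hτpos R
end
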